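/- Deterministic pointwise linearization bounds for two-layer ReLU networks: For every x ∈ ℝ^d with ‖x‖₂ ≤ 1 and every W ∈ S_B, (i) |f(x; W) − f̂(x; W)| ≤ (2/√m) Σ_{r=1}^m 1{|W_r(0)ᵀx| ≤ ‖W_r − W_r(0)‖₂} · ‖W_r − W_r(0)‖₂, and consequently |f(x; W) − f̂(x; W)|² ≤ (4B²/m) Σ_{r=1}^m 1{|W_r(0)ᵀx| ≤ ‖W_r − W_r(0)‖₂}; and (ii) ‖∇_W f(x; W) − ∇_W f(x; W(0))‖₂² ≤ (1/m) Σ_{r=1}^m 1{|W_r(0)ᵀx| ≤ ‖W_r − W_r(0)‖₂}. -/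

import Mathlib

noncomputable section

open Finset

/-- Euclidean space of inputs. -/
abbrev Vec (d : ℕ) := EuclideanSpace ℝ (Fin d)

/-- Weight space of a width-`m` two-layer network, with the Euclidean (ℓ²) norm of the
concatenated weight vector; block `r` consists of the coordinates `(r, i)`, `i < d`. -/
abbrev Wt (m d : ℕ) := EuclideanSpace ℝ (Fin m × Fin d)

/-- Preactivation `W_rᵀ x` of neuron `r`. -/
def npre {m d : ℕ} (W : Wt m d) (x : Vec d) (r : Fin m) : ℝ := ∑ i, W (r, i) * x i

/-- Two-layer ReLU network `f(x; W) = m^{-1/2} Σ_r s_r max(W_rᵀ x, 0)`. -/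
def net {m d : ℕ} (s : Fin m → ℝ) (W : Wt m d) (x : Vec d) : ℝ :=
  (Real.sqrt m)⁻¹ * ∑ r, s r * max (npre W x r) 0

/-- Formal gradient of the network in the weights: block `r` is
`m^{-1/2} s_r 1{W_rᵀ x > 0} x`. -/
def netGrad {m d : ℕ} (s : Fin m → ℝ) (W : Wt m d) (x : Vec d) : Wt m d :=
  WithLp.toLp 2 (fun p : Fin m × Fin d => (Real.sqrt m)⁻¹ * s p.1 * (if 0 < npre W x p.1 then x p.2 else 0))

/-- Linearization of the network at `W(0)`:
`f̂(x; W) = f(x; W(0)) + ⟨∇_W f(x; W(0)), W − W(0)⟩`. -/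
def netLin {m d : ℕ} (s : Fin m → ℝ) (W0 W : Wt m d) (x : Vec d) : ℝ :=
  net s W0 x + ∑ p : Fin m × Fin d, netGrad s W0 x p * (W p - W0 p)

/-- Norm `‖W_r − W_r(0)‖₂` of the `r`-th block of `W − W(0)`. -/
def bdiff {m d : ℕ} (W W0 : Wt m d) (r : Fin m) : ℝ :=
  Real.sqrt (∑ i, (W (r, i) - W0 (r, i)) ^ 2)

/-!
For each neuron put `a = W_r(0)ᵀx` and `b = W_rᵀx`. By Cauchy–Schwarz and `‖x‖ ≤ 1`,
`|b - a| ≤ ‖W_r - W_r(0)‖`, so `b` and `a` have the same sign unless `|a| ≤ ‖W_r - W_r(0)‖`.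
When the signs agree, ReLU is linear between `a` and `b`: both its first-order remainder and the
change of its derivative vanish. Otherwise the remainder is at most `2 |b - a|` because ReLU is
1-Lipschitz, and the derivative jumps by at most `1`. The squared bound follows from (i) by
Cauchy–Schwarz over the neurons near their kink, using `∑_r ‖W_r - W_r(0)‖² = ‖W - W(0)‖² ≤ B²`.
-/

lemma pos_iff_pos_of_abs_sub_lt_abs {a b : ℝ} (h : |b - a| < |a|) : 0 < b ↔ 0 < a := by
  cases abs_cases a <;> cases abs_cases (b - a) <;> constructor <;> intro <;> linarith

def reluRemainder (a b : ℝ) : ℝ := max b 0 - max a 0 - if 0 < a then b - a else 0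

lemma reluRemainder_eq_zero_of_abs_sub_lt_abs {a b : ℝ} (h : |b - a| < |a|) :
    reluRemainder a b = 0 := by
  have hba := pos_iff_pos_of_abs_sub_lt_abs h
  unfold reluRemainder
  by_cases ha : 0 < a
  · rw [if_pos ha, max_eq_left (hba.2 ha).le, max_eq_left ha.le]; ring
  · rw [if_neg ha, max_eq_right (not_lt.1 (hba.not.2 ha)), max_eq_right (not_lt.1 ha)]; ring

lemma abs_reluRemainder_le_two_mul_abs_sub (a b : ℝ) : |reluRemainder a b| ≤ 2 * |b - a| := by
  have hlin : |if 0 < a then b - a else 0| ≤ |b - a| := by split_ifs <;> simp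
  calc |reluRemainder a b| ≤ |max b 0 - max a 0| + |if 0 < a then b - a else 0| := abs_sub _ _
    _ ≤ |b - a| + |b - a| := add_le_add (abs_max_sub_max_le_abs _ _ _) hlin
    _ = 2 * |b - a| := by ring

lemma abs_reluRemainder_le {a b c : ℝ} (h : |b - a| ≤ c) :
    |reluRemainder a b| ≤ 2 * if |a| ≤ c then c else 0 := by
  split_ifs with hac
  · exact (abs_reluRemainder_le_two_mul_abs_sub a b).trans (by linarith)
  · simp [reluRemainder_eq_zero_of_abs_sub_lt_abs (h.trans_lt (not_le.1 hac))]

lemma sq_ite_pos_sub_ite_pos_le {a b c : ℝ} (h : |b - a| ≤ c) :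
    ((if 0 < b then (1 : ℝ) else 0) - if 0 < a then 1 else 0) ^ 2 ≤ if |a| ≤ c then 1 else 0 := by
  by_cases hac : |a| ≤ c
  · rw [if_pos hac]; split_ifs <;> norm_num
  · simp [hac, pos_iff_pos_of_abs_sub_lt_abs (h.trans_lt (not_le.1 hac))]

lemma sq_sum_ite_le_sum_ite_mul_sum_sq {ι : Type*} [Fintype ι] (p : ι → Prop) [DecidablePred p]
    (c : ι → ℝ) :
    (∑ i, if p i then c i else 0) ^ 2 ≤ (∑ i, if p i then (1 : ℝ) else 0) * ∑ i, c i ^ 2 := by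
  rw [← sum_filter, sum_boole]
  exact (sq_sum_le_card_mul_sum_sq ..).trans <| mul_le_mul_of_nonneg_left
    (sum_le_sum_of_subset_of_nonneg (subset_univ _) fun i _ _ => sq_nonneg _) (by positivity)

def Wt.row {m d : ℕ} (V : Wt m d) (r : Fin m) : Vec d := WithLp.toLp 2 fun i => V (r, i)

section Network

variable {m d : ℕ}

lemma npre_eq_inner (V : Wt m d) (x : Vec d) (r : Fin m) : npre V x r = inner ℝ x (V.row r) := by
  simp [npre, Wt.row, PiLp.inner_apply]

lemma npre_sub_npre (W0 W : Wt m d) (x : Vec d) (r : Fin m) :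
    npre W x r - npre W0 x r = npre (W - W0) x r := by
  simp [npre, sub_mul]

lemma bdiff_eq_norm_row (W W0 : Wt m d) (r : Fin m) : bdiff W W0 r = ‖(W - W0).row r‖ := by
  simp [bdiff, Wt.row, EuclideanSpace.norm_eq]

lemma sum_bdiff_sq (W W0 : Wt m d) : ∑ r, bdiff W W0 r ^ 2 = ‖W - W0‖ ^ 2 := by
  simp [bdiff_eq_norm_row, EuclideanSpace.real_norm_sq_eq, Wt.row, Fintype.sum_prod_type]

lemma abs_npre_sub_npre_le_bdiff (W0 W : Wt m d) {x : Vec d} (hx : ‖x‖ ≤ 1) (r : Fin m) :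
    |npre W x r - npre W0 x r| ≤ bdiff W W0 r := by
  rw [npre_sub_npre, npre_eq_inner, bdiff_eq_norm_row]
  exact (abs_real_inner_le_norm _ _).trans <|
    mul_le_of_le_one_left (norm_nonneg _) hx

lemma netGrad_apply (s : Fin m → ℝ) (W : Wt m d) (x : Vec d) (r : Fin m) (i : Fin d) :
    netGrad s W x (r, i) = (Real.sqrt m)⁻¹ * s r * if 0 < npre W x r then x i else 0 :=
  rfl

lemma sum_netGrad_mul_sub (s : Fin m → ℝ) (W0 W : Wt m d) (x : Vec d) :
    ∑ p, netGrad s W0 x p * (W p - W0 p)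
      = (Real.sqrt m)⁻¹ * ∑ r, s r * if 0 < npre W0 x r then npre W x r - npre W0 x r else 0 := by
  rw [Fintype.sum_prod_type, mul_sum]
  refine sum_congr rfl fun r _ => ?_
  by_cases h : 0 < npre W0 x r
  · simp only [netGrad_apply, h, if_true]
    rw [npre_sub_npre, npre, mul_sum, mul_sum]
    exact sum_congr rfl fun i _ => by simp only [PiLp.sub_apply]; ring
  · simp [netGrad_apply, h]

lemma net_sub_netLin (s : Fin m → ℝ) (W0 W : Wt m d) (x : Vec d) :
    net s W x - netLin s W0 W x
      = (Real.sqrt m)⁻¹ * ∑ r, s r * reluRemainder (npre W0 x r) (npre W x r) := by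
  rw [netLin, sum_netGrad_mul_sub]
  simp only [net, reluRemainder, mul_sub, sum_sub_distrib]
  ring

lemma abs_net_sub_netLin_le {s : Fin m → ℝ} (hs : ∀ r, |s r| ≤ 1) (W0 W : Wt m d) {x : Vec d}
    (hx : ‖x‖ ≤ 1) :
    |net s W x - netLin s W0 W x|
      ≤ (2 / Real.sqrt m) * ∑ r, if |npre W0 x r| ≤ bdiff W W0 r then bdiff W W0 r else 0 := by
  rw [net_sub_netLin, abs_mul, abs_of_nonneg (by positivity)]
  calc (Real.sqrt m)⁻¹ * |∑ r, s r * reluRemainder (npre W0 x r) (npre W x r)|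
      ≤ (Real.sqrt m)⁻¹ * ∑ r, |s r| * |reluRemainder (npre W0 x r) (npre W x r)| := by
        simp_rw [← abs_mul]
        gcongr
        exact abs_sum_le_sum_abs _ _
    _ ≤ (Real.sqrt m)⁻¹ *
          ∑ r, 1 * (2 * if |npre W0 x r| ≤ bdiff W W0 r then bdiff W W0 r else 0) := by
        gcongr with r
        · exact hs r
        · exact abs_reluRemainder_le (abs_npre_sub_npre_le_bdiff W0 W hx r)
    _ = _ := by simp only [one_mul, ← mul_sum]; ring

lemma sum_sq_netGrad_sub_netGrad_row_le {s : Fin m → ℝ} {r : Fin m} (hs : |s r| ≤ 1)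
    (W0 W : Wt m d) {x : Vec d} (hx : ‖x‖ ≤ 1) :
    ∑ i, (netGrad s W x (r, i) - netGrad s W0 x (r, i)) ^ 2
      ≤ (m : ℝ)⁻¹ * if |npre W0 x r| ≤ bdiff W W0 r then 1 else 0 := by
  set jump := (if 0 < npre W x r then (1 : ℝ) else 0) - if 0 < npre W0 x r then 1 else 0
  have hjump : jump ^ 2 ≤ if |npre W0 x r| ≤ bdiff W W0 r then 1 else 0 :=
    sq_ite_pos_sub_ite_pos_le (abs_npre_sub_npre_le_bdiff W0 W hx r)
  have hentry : ∀ i, (netGrad s W x (r, i) - netGrad s W0 x (r, i)) ^ 2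
      = (m : ℝ)⁻¹ * s r ^ 2 * jump ^ 2 * x i ^ 2 := by
    intro i
    have hscale : ((Real.sqrt m)⁻¹) ^ 2 = (m : ℝ)⁻¹ := by
      rw [inv_pow, Real.sq_sqrt (Nat.cast_nonneg m)]
    rw [netGrad_apply, netGrad_apply, ← hscale]
    simp only [jump]
    split_ifs <;> ring
  rw [sum_congr rfl fun i _ => hentry i, ← mul_sum, ← EuclideanSpace.real_norm_sq_eq]
  calc (m : ℝ)⁻¹ * s r ^ 2 * jump ^ 2 * ‖x‖ ^ 2
      ≤ (m : ℝ)⁻¹ * 1 * (if |npre W0 x r| ≤ bdiff W W0 r then 1 else 0) * 1 := by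
        gcongr
        · exact sq_le_one_iff_abs_le_one _ |>.2 hs
        · exact pow_le_one₀ (norm_nonneg _) hx
    _ = _ := by ring

lemma sum_sq_netGrad_sub_netGrad_le {s : Fin m → ℝ} (hs : ∀ r, |s r| ≤ 1) (W0 W : Wt m d)
    {x : Vec d} (hx : ‖x‖ ≤ 1) :
    ∑ p, (netGrad s W x p - netGrad s W0 x p) ^ 2
      ≤ (1 / m) * ∑ r, if |npre W0 x r| ≤ bdiff W W0 r then (1 : ℝ) else 0 := by
  rw [Fintype.sum_prod_type, one_div, mul_sum]
  exact sum_le_sum fun r _ => sum_sq_netGrad_sub_netGrad_row_le (hs r) W0 W hx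

end Network

theorem stmt_3_general
    {m d : ℕ} (B : ℝ)
    (s : Fin m → ℝ) (hs : ∀ r, s r = 1 ∨ s r = -1)
    (W0 W : Wt m d) (hW : ‖W - W0‖ ≤ B)
    (x : Vec d) (hx : ‖x‖ ≤ 1) :
    |net s W x - netLin s W0 W x|
        ≤ (2 / Real.sqrt m) *
          ∑ r, (if |npre W0 x r| ≤ bdiff W W0 r then bdiff W W0 r else 0)
    ∧ |net s W x - netLin s W0 W x| ^ 2
        ≤ (4 * B ^ 2 / m) *
          ∑ r, (if |npre W0 x r| ≤ bdiff W W0 r then (1 : ℝ) else 0)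
    ∧ ∑ p : Fin m × Fin d, (netGrad s W x p - netGrad s W0 x p) ^ 2
        ≤ (1 / m) * ∑ r, (if |npre W0 x r| ≤ bdiff W W0 r then (1 : ℝ) else 0) := by
  have hs_le : ∀ r, |s r| ≤ 1 := fun r => by rcases hs r with h | h <;> simp [h]
  have hlin := abs_net_sub_netLin_le hs_le W0 W hx
  refine ⟨hlin, ?_, sum_sq_netGrad_sub_netGrad_le hs_le W0 W hx⟩
  have hcs := sq_sum_ite_le_sum_ite_mul_sum_sq (fun r => |npre W0 x r| ≤ bdiff W W0 r)
    (bdiff W W0)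
  rw [sum_bdiff_sq] at hcs
  calc |net s W x - netLin s W0 W x| ^ 2
      ≤ ((2 / Real.sqrt m) *
          ∑ r, if |npre W0 x r| ≤ bdiff W W0 r then bdiff W W0 r else 0) ^ 2 := by
        gcongr
    _ = 4 / m * (∑ r, if |npre W0 x r| ≤ bdiff W W0 r then bdiff W W0 r else 0) ^ 2 := by
        rw [mul_pow, div_pow, Real.sq_sqrt (Nat.cast_nonneg m)]; norm_num
    _ ≤ 4 / m * ((∑ r, if |npre W0 x r| ≤ bdiff W W0 r then (1 : ℝ) else 0) * B ^ 2) := by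
        gcongr
        exact hcs.trans (by gcongr)
    _ = _ := by ring

/-- Deterministic pointwise linearization bounds for two-layer ReLU networks:
for `‖x‖ ≤ 1` and `W ∈ S_B`,
(i) `|f(x;W) − f̂(x;W)| ≤ (2/√m) Σ_r 1{|W_r(0)ᵀx| ≤ ‖W_r − W_r(0)‖} ‖W_r − W_r(0)‖`,
hence `|f(x;W) − f̂(x;W)|² ≤ (4B²/m) Σ_r 1{|W_r(0)ᵀx| ≤ ‖W_r − W_r(0)‖}`; and
(ii) `‖∇_W f(x;W) − ∇_W f(x;W(0))‖² ≤ (1/m) Σ_r 1{|W_r(0)ᵀx| ≤ ‖W_r − W_r(0)‖}`. -/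
theorem stmt_3
    {m d : ℕ} (hm : 0 < m) (B : ℝ) (hB : 0 < B)
    (s : Fin m → ℝ) (hs : ∀ r, s r = 1 ∨ s r = -1)
    (W0 W : Wt m d) (hW : ‖W - W0‖ ≤ B)
    (x : Vec d) (hx : ‖x‖ ≤ 1) :
    |net s W x - netLin s W0 W x|
        ≤ (2 / Real.sqrt m) *
          ∑ r, (if |npre W0 x r| ≤ bdiff W W0 r then bdiff W W0 r else 0)
    ∧ |net s W x - netLin s W0 W x| ^ 2
        ≤ (4 * B ^ 2 / m) *
          ∑ r, (if |npre W0 x r| ≤ bdiff W W0 r then (1 : ℝ) else 0)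
    ∧ ∑ p : Fin m × Fin d, (netGrad s W x p - netGrad s W0 x p) ^ 2
        ≤ (1 / m) * ∑ r, (if |npre W0 x r| ≤ bdiff W W0 r then (1 : ℝ) else 0) :=
  stmt_3_general B s hs W0 W hW x hx
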